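/- Let S be an inverse semigroup satisfying xⁿ = xⁿ⁺¹ for some n ≥ 1, and define a ⊕ b := (a·b⁻¹)ⁿ·a. Then ⊕ is associative and idempotent, so (S, ⊕) is a semilattice. -/

import Mathlib

set_option linter.unusedSectionVars false


/-- `pw x n` is the power `xⁿ` in a semigroup, for `n ≥ 1`
(with junk value `pw x 0 = x`). -/
def pw {S : Type*} [Mul S] (x : S) : ℕ → S
  | 0 => x
  | 1 => x
  | n + 2 => pw x (n + 1) * x


section Aux
variable {S : Type*} [Semigroup S] (inv : S → S)
  (h1 : ∀ x, x * inv x * x = x)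
  (h2 : ∀ x, inv x * x * inv x = inv x)
  (huniq : ∀ x y, x * y * x = x → y * x * y = y → y = inv x)

include h1 h2 huniq

private lemma inv_invol (a : S) : inv (inv a) = a :=
  (huniq (inv a) a (h2 a) (h1 a)).symm

private lemma inv_of_idem (e : S) (he : e * e = e) : inv e = e :=
  (huniq e e (by rw [he, he]) (by rw [he, he])).symm

private lemma idem_mi (a : S) : (a * inv a) * (a * inv a) = a * inv a := by
  rw [← mul_assoc, h1]

private lemma idem_im (a : S) : (inv a * a) * (inv a * a) = inv a * a := by
  rw [← mul_assoc, h2]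

-- x := inv (e*f) equals f*x*e, and is idempotent; then e*f = x, and f*e = inv(e*f) = e*f.
private lemma idcomm (e f : S) (he : e * e = e) (hf : f * f = f) : e * f = f * e := by
  have key : ∀ g h : S, g * g = g → h * h = h → (g * h) * (g * h) = g * h := by
    intro g h hg hh
    set x := inv (g * h) with hx
    have hfxe : h * x * g = x := huniq (g * h) (h * x * g)
      (by
        have := h1 (g * h)
        calc g * h * (h * x * g) * (g * h)
            = g * (h * h) * x * (g * g) * h := by simp only [mul_assoc]
          _ = g * h * x * (g * h) := by rw [hg, hh]; simp only [mul_assoc]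
          _ = g * h := this)
      (by
        have := h2 (g * h)
        calc h * x * g * (g * h) * (h * x * g)
            = h * (x * ((g * g) * ((h * h) * (x * g)))) := by simp only [mul_assoc]
          _ = h * (x * (g * (h * (x * g)))) := by rw [hg, hh]
          _ = h * (x * (g * h) * x * g) := by simp only [mul_assoc]
          _ = h * x * g := by rw [this]; simp only [mul_assoc]; rfl)
    have hxx : x * x = x := by
      conv_lhs => rw [← hfxe]
      calc h * x * g * (h * x * g)
          = h * (x * (g * h) * x * g) := by simp only [mul_assoc]
        _ = h * x * g := by rw [h2 (g * h)]; simp only [mul_assoc]; rfl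
        _ = x := hfxe
    have hgx : g * h = x := by
      have h3 : inv x = x := inv_of_idem inv h1 h2 huniq x hxx
      have h4 : inv x = g * h := by rw [hx, inv_invol inv h1 h2 huniq]
      rw [← h4, h3]
    rw [hgx, hxx]
  have hef : (e * f) * (e * f) = e * f := key e f he hf
  have hfe : (f * e) * (f * e) = f * e := key f e hf he
  have : f * e = inv (e * f) := huniq (e * f) (f * e)
    (by
      calc e * f * (f * e) * (e * f) = e * (f * f) * (e * e) * f := by simp only [mul_assoc]
        _ = (e * f) * (e * f) := by rw [he, hf]; simp only [mul_assoc]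
        _ = e * f := hef)
    (by
      calc f * e * (e * f) * (f * e) = f * (e * e) * (f * f) * e := by simp only [mul_assoc]
        _ = (f * e) * (f * e) := by rw [he, hf]; simp only [mul_assoc]
        _ = f * e := hfe)
  rw [this, inv_of_idem inv h1 h2 huniq _ hef]


private lemma minv_rev (a b : S) : inv (a * b) = inv b * inv a := by
  refine (huniq (a * b) (inv b * inv a) ?_ ?_).symm
  · have hc := idcomm inv h1 h2 huniq (b * inv b) (inv a * a) (idem_mi inv h1 h2 huniq b)
      (idem_im inv h1 h2 huniq a)
    calc a * b * (inv b * inv a) * (a * b)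
        = a * ((b * inv b) * (inv a * a)) * b := by simp only [mul_assoc]
      _ = a * ((inv a * a) * (b * inv b)) * b := by rw [hc]
      _ = (a * inv a * a) * (b * inv b * b) := by simp only [mul_assoc]
      _ = a * b := by rw [h1, h1]
  · have hc := idcomm inv h1 h2 huniq (b * inv b) (inv a * a) (idem_mi inv h1 h2 huniq b)
      (idem_im inv h1 h2 huniq a)
    calc inv b * inv a * (a * b) * (inv b * inv a)
        = inv b * ((inv a * a) * (b * inv b)) * inv a := by simp only [mul_assoc]
      _ = inv b * ((b * inv b) * (inv a * a)) * inv a := by rw [← hc]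
      _ = (inv b * b * inv b) * (inv a * a * inv a) := by simp only [mul_assoc]
      _ = inv b * inv a := by rw [h2, h2]

private lemma pw_succ (x : S) (k : ℕ) (hk : 1 ≤ k) : pw x (k + 1) = pw x k * x := by
  cases k with
  | zero => omega
  | succ m => rfl

private lemma pw_comm (x : S) : ∀ k, 1 ≤ k → x * pw x k = pw x k * x := by
  intro k hk
  induction k with
  | zero => omega
  | succ m ih =>
    cases m with
    | zero => rfl
    | succ p =>
      have ih' := ih (Nat.succ_le_succ (Nat.zero_le p))
      show x * (pw x (p + 1) * x) = pw x (p + 1) * x * x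
      rw [← mul_assoc, ih']

private lemma pw_inv (x : S) : ∀ k, 1 ≤ k → inv (pw x k) = pw (inv x) k := by
  intro k hk
  induction k with
  | zero => omega
  | succ m ih =>
    cases m with
    | zero => rfl
    | succ p =>
      have ih' := ih (Nat.succ_le_succ (Nat.zero_le p))
      show inv (pw x (p + 1) * x) = pw (inv x) (p + 1) * inv x
      rw [minv_rev inv h1 h2 huniq, ih', pw_comm inv h1 h2 huniq (inv x) (p + 1)
        (Nat.succ_le_succ (Nat.zero_le p))]

private lemma pw_idem (e : S) (he : e * e = e) : ∀ k, 1 ≤ k → pw e k = e := by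
  intro k hk
  induction k with
  | zero => omega
  | succ m ih =>
    cases m with
    | zero => rfl
    | succ p =>
      have ih' := ih (Nat.succ_le_succ (Nat.zero_le p))
      show pw e (p + 1) * e = e
      rw [ih', he]

section Power
variable (n : ℕ) (hn : 1 ≤ n) (hid : ∀ x : S, pw x n = pw x (n + 1))
include hn hid

private lemma hE1 (x : S) : pw x n * x = pw x n := by
  rw [← pw_succ inv h1 h2 huniq x n hn, ← hid]

private lemma hEk (x : S) : ∀ k, 1 ≤ k → pw x n * pw x k = pw x n := by
  intro k hk
  induction k with
  | zero => omega
  | succ m ih =>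
    cases m with
    | zero => exact hE1 inv h1 h2 huniq n hn hid x
    | succ p =>
      have ih' := ih (Nat.succ_le_succ (Nat.zero_le p))
      show pw x n * (pw x (p + 1) * x) = pw x n
      rw [← mul_assoc, ih', hE1 inv h1 h2 huniq n hn hid x]

private lemma hEE (x : S) : pw x n * pw x n = pw x n :=
  hEk inv h1 h2 huniq n hn hid x n hn

private lemma hEinv (x : S) : pw (inv x) n = pw x n :=
  (pw_inv inv h1 h2 huniq x n hn).symm.trans
    (inv_of_idem inv h1 h2 huniq (pw x n) (hEE inv h1 h2 huniq n hn hid x))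

private lemma hExi (x : S) : pw x n * inv x = pw x n := by
  have h := hE1 inv h1 h2 huniq n hn hid (inv x)
  rwa [hEinv inv h1 h2 huniq n hn hid x] at h

end Power

private lemma le_alt {d a : S} (hda : d = d * inv d * a) : d = a * inv a * d := by
  refine Eq.symm ?_
  calc a * inv a * d = a * inv a * (d * inv d * a) := by rw [← hda]
    _ = (a * inv a) * (d * inv d) * a := by simp only [mul_assoc]
    _ = (d * inv d) * (a * inv a) * a := by
        rw [idcomm inv h1 h2 huniq (a * inv a) (d * inv d) (idem_mi inv h1 h2 huniq a)
          (idem_mi inv h1 h2 huniq d)]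
    _ = d * inv d * a := by rw [mul_assoc (d * inv d), h1]
    _ = d := hda.symm

private lemma my_le_trans {d a b : S} (hda : d = d * inv d * a) (hab : a = a * inv a * b) :
    d = d * inv d * b := by
  have halt := le_alt inv h1 h2 huniq hda
  have h6 : a * inv a * (d * inv d) = d * inv d := by
    calc a * inv a * (d * inv d) = a * inv a * d * inv d := by rw [← mul_assoc]
      _ = d * inv d := by rw [← halt]
  have h5 : (d * inv d) * (a * inv a) = d * inv d :=
    (idcomm inv h1 h2 huniq (d * inv d) (a * inv a) (idem_mi inv h1 h2 huniq d)
      (idem_mi inv h1 h2 huniq a)).trans h6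
  calc d = d * inv d * a := hda
    _ = d * inv d * (a * inv a * b) := by conv_lhs => rw [hab]
    _ = d * inv d * (a * inv a) * b := by simp only [mul_assoc]
    _ = d * inv d * b := by rw [h5]

private lemma my_antisymm {d a : S} (hda : d = d * inv d * a) (had : a = a * inv a * d) :
    d = a :=
  (le_alt inv h1 h2 huniq hda).trans had.symm

private lemma lb1 (e a : S) (he : e * e = e) : e * a = e * a * inv (e * a) * a := by
  have hi : inv (e * a) = inv a * e := by
    rw [minv_rev inv h1 h2 huniq, inv_of_idem inv h1 h2 huniq e he]
  refine Eq.symm ?_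
  calc e * a * inv (e * a) * a = e * a * (inv a * e) * a := by rw [hi]
    _ = e * ((a * inv a) * e) * a := by simp only [mul_assoc]
    _ = e * (e * (a * inv a)) * a := by
        rw [idcomm inv h1 h2 huniq (a * inv a) e (idem_mi inv h1 h2 huniq a) he]
    _ = (e * e) * (a * inv a * a) := by simp only [mul_assoc]
    _ = e * a := by rw [he, h1]

section Power2
variable (n : ℕ) (hn : 1 ≤ n) (hid : ∀ x : S, pw x n = pw x (n + 1))
include hn hid

private lemma op_comm (a b : S) : pw (a * inv b) n * a = pw (b * inv a) n * b := by
  have hxinv : inv (a * inv b) = b * inv a := by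
    rw [minv_rev inv h1 h2 huniq, inv_invol inv h1 h2 huniq]
  have hswap : pw (b * inv a) n = pw (a * inv b) n := by
    rw [← hxinv, hEinv inv h1 h2 huniq n hn hid]
  set e := pw (a * inv b) n with hedef
  have hex : e * (a * inv b) = e := hE1 inv h1 h2 huniq n hn hid (a * inv b)
  have hex' : e * (b * inv a) = e := by
    rw [← hxinv]; exact hExi inv h1 h2 huniq n hn hid (a * inv b)
  have star1 : e * a * (inv b * b) = e * b := by
    calc e * a * (inv b * b) = e * (a * inv b) * b := by simp only [mul_assoc]
      _ = e * b := by rw [hex]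
  have star2 : e * b * (inv a * a) = e * a := by
    calc e * b * (inv a * a) = e * (b * inv a) * a := by simp only [mul_assoc]
      _ = e * a := by rw [hex']
  have hA : e * a = e * a * (inv b * b) * (inv a * a) := by rw [star1, star2]
  have key : e * a = e * b := by
    refine Eq.symm ?_
    calc e * b = e * a * (inv b * b) := star1.symm
      _ = (e * a * (inv b * b) * (inv a * a)) * (inv b * b) := by rw [← hA]
      _ = e * a * ((inv b * b) * (inv a * a)) * (inv b * b) := by simp only [mul_assoc]
      _ = e * a * ((inv a * a) * (inv b * b)) * (inv b * b) := by
          rw [idcomm inv h1 h2 huniq (inv b * b) (inv a * a) (idem_im inv h1 h2 huniq b)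
            (idem_im inv h1 h2 huniq a)]
      _ = e * a * (inv a * a) * ((inv b * b) * (inv b * b)) := by simp only [mul_assoc]
      _ = e * a * (inv a * a) * (inv b * b) := by rw [idem_im inv h1 h2 huniq b]
      _ = e * a * ((inv a * a) * (inv b * b)) := by simp only [mul_assoc]
      _ = e * a * ((inv b * b) * (inv a * a)) := by
          rw [idcomm inv h1 h2 huniq (inv a * a) (inv b * b) (idem_im inv h1 h2 huniq a)
            (idem_im inv h1 h2 huniq b)]
      _ = e * a * (inv b * b) * (inv a * a) := by simp only [mul_assoc]
      _ = e * a := hA.symm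
  rw [hswap]; exact key

private lemma glb {d a b : S} (hda : d = d * inv d * a) (hdb : d = d * inv d * b) :
    d = d * inv d * (pw (a * inv b) n * a) := by
  have hcomm_pq : d * inv d * (b * inv b) = b * inv b * (d * inv d) :=
    idcomm inv h1 h2 huniq (d * inv d) (b * inv b) (idem_mi inv h1 h2 huniq d)
      (idem_mi inv h1 h2 huniq b)
  have hpx : d * inv d * (a * inv b) = d * inv d * (b * inv b) := by
    calc d * inv d * (a * inv b) = d * inv d * a * inv b := by rw [← mul_assoc]
      _ = d * inv b := by rw [← hda]
      _ = d * inv d * b * inv b := by conv_lhs => rw [hdb]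
      _ = d * inv d * (b * inv b) := by rw [mul_assoc (d * inv d)]
  have hpk : ∀ k, 1 ≤ k → d * inv d * pw (a * inv b) k = d * inv d * (b * inv b) := by
    intro k hk
    induction k with
    | zero => omega
    | succ m ih =>
      cases m with
      | zero => exact hpx
      | succ p =>
        have ih' := ih (Nat.succ_le_succ (Nat.zero_le p))
        show d * inv d * (pw (a * inv b) (p + 1) * (a * inv b)) = d * inv d * (b * inv b)
        calc d * inv d * (pw (a * inv b) (p + 1) * (a * inv b))
            = (d * inv d * pw (a * inv b) (p + 1)) * (a * inv b) := by rw [← mul_assoc]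
          _ = (d * inv d * (b * inv b)) * (a * inv b) := by rw [ih']
          _ = (b * inv b * (d * inv d)) * (a * inv b) := by rw [hcomm_pq]
          _ = b * inv b * (d * inv d * (a * inv b)) := by rw [mul_assoc]
          _ = b * inv b * (d * inv d * (b * inv b)) := by rw [hpx]
          _ = b * inv b * (b * inv b * (d * inv d)) := by rw [hcomm_pq]
          _ = (b * inv b * (b * inv b)) * (d * inv d) := by rw [← mul_assoc]
          _ = b * inv b * (d * inv d) := by rw [idem_mi inv h1 h2 huniq b]
          _ = d * inv d * (b * inv b) := hcomm_pq.symm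
  refine Eq.symm ?_
  calc d * inv d * (pw (a * inv b) n * a)
      = d * inv d * pw (a * inv b) n * a := by rw [← mul_assoc]
    _ = d * inv d * (b * inv b) * a := by rw [hpk n hn]
    _ = b * inv b * (d * inv d) * a := by rw [hcomm_pq]
    _ = b * inv b * (d * inv d * a) := by rw [mul_assoc]
    _ = b * inv b * d := by rw [← hda]
    _ = b * inv b * (d * inv d * b) := by conv_lhs => rw [hdb]
    _ = b * inv b * (d * inv d) * b := by simp only [mul_assoc]
    _ = d * inv d * (b * inv b) * b := by rw [← hcomm_pq]
    _ = d * inv d * (b * inv b * b) := by simp only [mul_assoc]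
    _ = d * inv d * b := by rw [h1]
    _ = d := hdb.symm

end Power2
end Aux


/-- In an inverse semigroup satisfying xⁿ = xⁿ⁺¹ (n ≥ 1), the operation
a ⊕ b := (a * b⁻¹)ⁿ * a is associative and idempotent (and commutative),
so (S, ⊕) is a semilattice. -/
theorem stmt_9 {S : Type*} [Semigroup S] (inv : S → S)
    (h1 : ∀ x, x * inv x * x = x)
    (h2 : ∀ x, inv x * x * inv x = inv x)
    (huniq : ∀ x y, x * y * x = x → y * x * y = y → y = inv x)
    (n : ℕ) (hn : 1 ≤ n) (hid : ∀ x : S, pw x n = pw x (n + 1)) :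
    (∀ a b c : S,
        pw (pw (a * inv b) n * a * inv c) n * (pw (a * inv b) n * a) =
        pw (a * inv (pw (b * inv c) n * b)) n * a) ∧
    (∀ a : S, pw (a * inv a) n * a = a) ∧
    (∀ a b : S, pw (a * inv b) n * a = pw (b * inv a) n * b) := by
  have lbA : ∀ p q : S,
      pw (p * inv q) n * p = pw (p * inv q) n * p * inv (pw (p * inv q) n * p) * p :=
    fun p q => lb1 inv h1 h2 huniq (pw (p * inv q) n) p
      (hEE inv h1 h2 huniq n hn hid (p * inv q))
  have lbB : ∀ p q : S,
      pw (p * inv q) n * p = pw (p * inv q) n * p * inv (pw (p * inv q) n * p) * q := by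
    intro p q
    rw [op_comm inv h1 h2 huniq n hn hid p q]
    exact lbA q p
  refine ⟨?_, ?_, ?_⟩
  · intro a b c
    have hu_A := lbA (pw (a * inv b) n * a) c
    have hu_c := lbB (pw (a * inv b) n * a) c
    have hA_a := lbA a b
    have hA_b := lbB a b
    have hu_a := my_le_trans inv h1 h2 huniq hu_A hA_a
    have hu_b := my_le_trans inv h1 h2 huniq hu_A hA_b
    have hu_B := glb inv h1 h2 huniq n hn hid hu_b hu_c
    have hu_v := glb inv h1 h2 huniq n hn hid hu_a hu_B
    have hv_a := lbA a (pw (b * inv c) n * b)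
    have hv_B := lbB a (pw (b * inv c) n * b)
    have hB_b := lbA b c
    have hB_c := lbB b c
    have hv_b := my_le_trans inv h1 h2 huniq hv_B hB_b
    have hv_c := my_le_trans inv h1 h2 huniq hv_B hB_c
    have hv_A := glb inv h1 h2 huniq n hn hid hv_a hv_b
    have hv_u := glb inv h1 h2 huniq n hn hid hv_A hv_c
    exact my_antisymm inv h1 h2 huniq hu_v hv_u
  · intro a
    rw [pw_idem inv h1 h2 huniq (a * inv a) (idem_mi inv h1 h2 huniq a) n hn, h1]
  · exact op_comm inv h1 h2 huniq n hn hid
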